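/- arXiv:1011.0653 — 5 statements merged into one kernel-verified Lean document; each statement's English description precedes it below -/
import Mathlib

section
/- Let G=(V,E) be a finite simple undirected connected graph with |V| ≥ 2 and diameter Δ, and let ρ ∈ (0,1]. If the set {v ∈ V : d(v) > 1/ρ} is nonempty, then min-seed^{(Δ)}(G,ρ) ≤ Σ_{v ∈ V, d(v) > 1/ρ} (⌈ρ·d(v)⌉ + 1). -/
/-- One round of the synchronous reversible cascade on an undirected graph:
`ractive G ρ S k` is the set of active vertices in round `k`, starting from seed set `S`. -/
def ractive {V : Type*} (G : SimpleGraph V) (ρ : ℝ) (S : Set V) : ℕ → Set V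
  | 0 => S
  | k + 1 =>
      {v | 0 < (G.neighborSet v).ncard ∧
        ρ * (G.neighborSet v).ncard ≤ ((G.neighborSet v ∩ ractive G ρ S k).ncard : ℝ)} ∪
      {v | v ∈ S ∧ (G.neighborSet v).ncard = 0}

/-- `minSeed G ρ k` is the minimum number of seeds activating all vertices in round `k`. -/
noncomputable def minSeed {V : Type*} (G : SimpleGraph V) (ρ : ℝ) (k : ℕ) : ℕ :=
  sInf {m | ∃ S : Set V, S.ncard = m ∧ ractive G ρ S k = Set.univ}

open Classical in
theorem stmt_0 {V : Type*} [Fintype V] (G : SimpleGraph V)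
    (hconn : G.Connected) (hV : 2 ≤ Fintype.card V)
    (ρ : ℝ) (hρ0 : 0 < ρ) (hρ1 : ρ ≤ 1)
    (hne : ({v : V | 1 / ρ < ((G.neighborSet v).ncard : ℝ)}).Nonempty) :
    (minSeed G ρ G.diam : ℝ) ≤
      ∑ v ∈ Finset.univ.filter (fun v : V => 1 / ρ < ((G.neighborSet v).ncard : ℝ)),
        ((⌈ρ * ((G.neighborSet v).ncard : ℝ)⌉ : ℝ) + 1) := by
  classical
  -- every vertex has positive degree
  have hdpos : ∀ v : V, 0 < (G.neighborSet v).ncard := by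
    intro v
    obtain ⟨u, hu⟩ := Fintype.exists_ne_of_one_lt_card (by omega) v
    obtain ⟨p⟩ := hconn.preconnected v u
    cases p with
    | nil => exact absurd rfl hu
    | cons h q =>
      exact (Set.ncard_pos (Set.toFinite _)).mpr ⟨_, (SimpleGraph.mem_neighborSet G v _).mpr h⟩
  -- choose, for each high-degree vertex, a batch of ⌈ρ d⌉ neighbors
  have hex : ∀ v : V, ∃ T : Finset V, (1 / ρ < ((G.neighborSet v).ncard : ℝ) →
      ((↑T : Set V) ⊆ G.neighborSet v ∧
        T.card = (⌈ρ * ((G.neighborSet v).ncard : ℝ)⌉).toNat)) := by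
    intro v
    by_cases h : 1 / ρ < ((G.neighborSet v).ncard : ℝ)
    · have hle : (⌈ρ * ((G.neighborSet v).ncard : ℝ)⌉).toNat ≤
          ((G.neighborSet v).toFinite.toFinset).card := by
        rw [Set.Finite.card_toFinset, ← Set.toFinset_card, ← Set.ncard_eq_toFinset_card']
        rw [Int.toNat_le]
        rw [Int.ceil_le]
        push_cast
        nlinarith [Nat.cast_nonneg (α := ℝ) (G.neighborSet v).ncard]
      obtain ⟨T, hTsub, hTcard⟩ := Finset.exists_subset_card_eq hle
      refine ⟨T, fun _ => ⟨?_, hTcard⟩⟩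
      intro x hx
      exact (Set.Finite.mem_toFinset _).mp (hTsub hx)
    · exact ⟨∅, fun h' => absurd h' h⟩
  choose T hT using hex
  set H : Finset V :=
    Finset.univ.filter (fun v : V => 1 / ρ < ((G.neighborSet v).ncard : ℝ)) with hH
  set SF : Finset V := H.biUnion (fun v => insert v (T v)) with hSF
  set S : Set V := (↑SF : Set V) with hS
  have hmemH : ∀ v ∈ H, v ∈ S := by
    intro v hv
    exact Finset.mem_coe.mpr (Finset.mem_biUnion.mpr ⟨v, hv, Finset.mem_insert_self _ _⟩)
  have hTsubS : ∀ v ∈ H, (↑(T v) : Set V) ⊆ S := by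
    intro v hv x hx
    exact Finset.mem_coe.mpr
      (Finset.mem_biUnion.mpr ⟨v, hv, Finset.mem_insert_of_mem hx⟩)
  -- one activation step
  have step : ∀ (k : ℕ) (u : V), S ⊆ ractive G ρ S k →
      ((1 / ρ < ((G.neighborSet u).ncard : ℝ)) ∨
        ∃ w, G.Adj u w ∧ w ∈ ractive G ρ S k) →
      u ∈ ractive G ρ S (k + 1) := by
    intro k u hSsub hcase
    have hmem : u ∈ {v | 0 < (G.neighborSet v).ncard ∧
        ρ * (G.neighborSet v).ncard ≤ ((G.neighborSet v ∩ ractive G ρ S k).ncard : ℝ)} := by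
      refine ⟨hdpos u, ?_⟩
      by_cases h : 1 / ρ < ((G.neighborSet u).ncard : ℝ)
      · have hvH : u ∈ H := Finset.mem_filter.mpr ⟨Finset.mem_univ u, h⟩
        obtain ⟨hTsub', hTcard⟩ := hT u h
        have hsub : (↑(T u) : Set V) ⊆ G.neighborSet u ∩ ractive G ρ S k :=
          fun x hx => ⟨hTsub' hx, hSsub (hTsubS u hvH hx)⟩
        have h1 : ((T u).card : ℝ) ≤ ((G.neighborSet u ∩ ractive G ρ S k).ncard : ℝ) := by
          have := Set.ncard_le_ncard hsub (Set.toFinite _)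
          rw [Set.ncard_coe_finset] at this
          exact_mod_cast this
        have hnn : (0 : ℤ) ≤ ⌈ρ * ((G.neighborSet u).ncard : ℝ)⌉ :=
          Int.ceil_nonneg (by positivity)
        have h2 : ρ * ((G.neighborSet u).ncard : ℝ) ≤ ((T u).card : ℝ) := by
          rw [hTcard]
          have e : (((⌈ρ * ((G.neighborSet u).ncard : ℝ)⌉).toNat : ℕ) : ℝ) =
              ((⌈ρ * ((G.neighborSet u).ncard : ℝ)⌉ : ℤ) : ℝ) := by
            exact_mod_cast Int.toNat_of_nonneg hnn
          rw [e]
          exact Int.le_ceil _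
        linarith
      · obtain ⟨w, hw, hwA⟩ := hcase.resolve_left h
        have hmemw : w ∈ G.neighborSet u ∩ ractive G ρ S k := ⟨hw, hwA⟩
        have hpos : 0 < (G.neighborSet u ∩ ractive G ρ S k).ncard :=
          (Set.ncard_pos (Set.toFinite _)).mpr ⟨w, hmemw⟩
        have h1 : (1 : ℝ) ≤ ((G.neighborSet u ∩ ractive G ρ S k).ncard : ℝ) :=
          Nat.one_le_cast.mpr hpos
        push_neg at h
        have h2 : ρ * ((G.neighborSet u).ncard : ℝ) ≤ 1 := by
          have := mul_le_mul_of_nonneg_left h hρ0.le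
          rwa [mul_one_div, div_self hρ0.ne'] at this
        linarith
    exact Set.mem_union_left _ hmem
  -- the seed set stays active forever
  have hA : ∀ k : ℕ, S ⊆ ractive G ρ S k := by
    intro k
    induction k with
    | zero => exact fun x hx => hx
    | succ k ih =>
      intro u hu
      obtain ⟨v, hvH, hv⟩ := Finset.mem_biUnion.mp (Finset.mem_coe.mp hu)
      rcases Finset.mem_insert.mp hv with rfl | huT
      · exact step k u ih (Or.inl (Finset.mem_filter.mp hvH).2)
      · by_cases h : 1 / ρ < ((G.neighborSet u).ncard : ℝ)
        · exact step k u ih (Or.inl h)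
        · have hadj : G.Adj u v := by
            have hvhigh := (Finset.mem_filter.mp hvH).2
            have := (hT v hvhigh).1 (Finset.mem_coe.mpr huT)
            exact ((SimpleGraph.mem_neighborSet G v u).mp this).symm
          exact step k u ih (Or.inr ⟨v, hadj, ih (hmemH v hvH)⟩)
  -- pick a high-degree vertex
  obtain ⟨vs, hvs⟩ := hne
  have hvsH : vs ∈ H := Finset.mem_filter.mpr ⟨Finset.mem_univ vs, hvs⟩
  -- spreading along shortest paths
  have hB : ∀ (k : ℕ) (u : V), G.dist vs u ≤ k → u ∈ ractive G ρ S k := by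
    intro k
    induction k with
    | zero =>
      intro u hu
      have : vs = u := (hconn.dist_eq_zero_iff).mp (Nat.le_zero.mp hu)
      subst this
      exact hmemH vs hvsH
    | succ k ih =>
      intro u hu
      by_cases he : vs = u
      · subst he
        exact hA (k + 1) (hmemH vs hvsH)
      · obtain ⟨p, hp⟩ := (hconn.preconnected vs u).exists_walk_length_eq_dist
        have hpr : p.reverse.length = p.length := SimpleGraph.Walk.length_reverse p
        cases hq : p.reverse with
        | nil => exact absurd rfl he
        | @cons _ w _ hadj q =>
          have hlen : q.length + 1 = p.length := by
            rw [← hpr, hq, SimpleGraph.Walk.length_cons]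
          have hdw : G.dist vs w ≤ k := by
            have h1 : G.dist vs w ≤ q.reverse.length := SimpleGraph.dist_le _
            rw [SimpleGraph.Walk.length_reverse] at h1
            omega
          exact step k u (hA k) (Or.inr ⟨w, hadj, ih w hdw⟩)
  -- everything is active after diam rounds
  have hediam : G.ediam ≠ ⊤ := by
    have : Nonempty V := Fintype.card_pos_iff.mp (by omega)
    obtain ⟨a, b, hab⟩ := SimpleGraph.exists_edist_eq_ediam_of_finite (G := G)
    rw [← hab]
    exact SimpleGraph.edist_ne_top_iff_reachable.mpr (hconn.preconnected a b)
  have huniv : ractive G ρ S G.diam = Set.univ :=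
    Set.eq_univ_of_forall fun u => hB _ u (SimpleGraph.dist_le_diam hediam)
  have hmin : minSeed G ρ G.diam ≤ SF.card :=
    Nat.sInf_le ⟨S, Set.ncard_coe_finset SF, huniv⟩
  have hcard : SF.card ≤ ∑ v ∈ H, ((⌈ρ * ((G.neighborSet v).ncard : ℝ)⌉).toNat + 1) := by
    refine (Finset.card_biUnion_le).trans (Finset.sum_le_sum ?_)
    intro v hv
    have h2 := (hT v (Finset.mem_filter.mp hv).2).2
    calc (insert v (T v)).card ≤ (T v).card + 1 := Finset.card_insert_le _ _
      _ = _ := by rw [h2]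
  have hsum : ((∑ v ∈ H, ((⌈ρ * ((G.neighborSet v).ncard : ℝ)⌉).toNat + 1) : ℕ) : ℝ) =
      ∑ v ∈ H, ((⌈ρ * ((G.neighborSet v).ncard : ℝ)⌉ : ℝ) + 1) := by
    push_cast
    refine Finset.sum_congr rfl fun v hv => ?_
    have hnn : (0 : ℤ) ≤ ⌈ρ * ((G.neighborSet v).ncard : ℝ)⌉ :=
      Int.ceil_nonneg (by positivity)
    have e : (((⌈ρ * ((G.neighborSet v).ncard : ℝ)⌉).toNat : ℕ) : ℝ) =
        ((⌈ρ * ((G.neighborSet v).ncard : ℝ)⌉ : ℤ) : ℝ) := by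
      exact_mod_cast Int.toNat_of_nonneg hnn
    rw [e]
  calc (minSeed G ρ G.diam : ℝ) ≤ (SF.card : ℝ) := by exact_mod_cast hmin
    _ ≤ ((∑ v ∈ H, ((⌈ρ * ((G.neighborSet v).ncard : ℝ)⌉).toNat + 1) : ℕ) : ℝ) := by
        exact_mod_cast hcard
    _ = ∑ v ∈ H, ((⌈ρ * ((G.neighborSet v).ncard : ℝ)⌉ : ℝ) + 1) := hsum
end

section
/- Let G=(V,E) be a finite simple undirected connected graph with |V| ≥ 2 and diameter Δ, and let ρ ∈ (0,1]. If every vertex v ∈ V satisfies d(v) ≤ 1/ρ, then min-seed^{(Δ)}(G,ρ) ≤ 2. -/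
/-- Bouncing walk along an edge: for every `n` there is a walk of length `n`
from `u` ending at `u` or `w`. -/
lemma bounce_walk {V : Type*} {G : SimpleGraph V} {u w : V} (h : G.Adj u w) :
    ∀ n : ℕ, ∃ x, (x = u ∨ x = w) ∧ ∃ p : G.Walk u x, p.length = n := by
  intro n
  induction n with
  | zero => exact ⟨u, Or.inl rfl, SimpleGraph.Walk.nil, rfl⟩
  | succ n ih =>
    obtain ⟨x, hx, p, hp⟩ := ih
    rcases hx with rfl | rfl
    · exact ⟨w, Or.inr rfl, p.concat h, by rw [SimpleGraph.Walk.length_concat, hp]⟩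
    · exact ⟨u, Or.inl rfl, p.concat h.symm, by rw [SimpleGraph.Walk.length_concat, hp]⟩

/-- If there is a walk of length exactly `k` from `v` to a seed, then `v` is active
in round `k` (given that all degrees are positive and at most `1/ρ`). -/
lemma walk_mem_ractive {V : Type*} [Fintype V] {G : SimpleGraph V} {ρ : ℝ}
    (hρ0 : 0 < ρ) (hdeg : ∀ v : V, ((G.neighborSet v).ncard : ℝ) ≤ 1 / ρ)
    (hpos : ∀ v : V, (G.neighborSet v).Nonempty) (S : Set V) :
    ∀ (k : ℕ) (v x : V), x ∈ S → ∀ p : G.Walk v x, p.length = k →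
      v ∈ ractive G ρ S k := by
  intro k
  induction k with
  | zero =>
    intro v x hx p hp
    have : v = x := SimpleGraph.Walk.eq_of_length_eq_zero hp
    rw [ractive, this]; exact hx
  | succ k ih =>
    intro v x hx p hp
    cases p with
    | nil => simp at hp
    | @cons _ b _ hadj q =>
      simp only [SimpleGraph.Walk.length_cons, Nat.succ.injEq] at hp
      have hb : b ∈ ractive G ρ S k := ih b x hx q hp
      rw [ractive]
      left
      have hposn : 0 < (G.neighborSet v).ncard :=
        (Set.ncard_pos (Set.toFinite _)).mpr (hpos v)
      refine ⟨hposn, ?_⟩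
      have h1 : (1 : ℕ) ≤ (G.neighborSet v ∩ ractive G ρ S k).ncard := by
        have : (G.neighborSet v ∩ ractive G ρ S k).Nonempty := ⟨b, hadj, hb⟩
        exact (Set.ncard_pos (Set.toFinite _)).mpr this
      have h2 : ρ * ((G.neighborSet v).ncard : ℝ) ≤ 1 := by
        have := mul_le_mul_of_nonneg_left (hdeg v) hρ0.le
        rwa [mul_one_div, div_self hρ0.ne'] at this
      calc ρ * ((G.neighborSet v).ncard : ℝ) ≤ 1 := h2
        _ ≤ ((G.neighborSet v ∩ ractive G ρ S k).ncard : ℝ) := by exact_mod_cast h1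

theorem stmt_1 {V : Type*} [Fintype V] (G : SimpleGraph V)
    (hconn : G.Connected) (hV : 2 ≤ Fintype.card V)
    (ρ : ℝ) (hρ0 : 0 < ρ) (hρ1 : ρ ≤ 1)
    (hdeg : ∀ v : V, ((G.neighborSet v).ncard : ℝ) ≤ 1 / ρ) :
    minSeed G ρ G.diam ≤ 2 := by
  have hnt : Nontrivial V := Fintype.one_lt_card_iff_nontrivial.mp hV
  -- every vertex has a neighbor
  have hpos : ∀ v : V, (G.neighborSet v).Nonempty := by
    intro v
    obtain ⟨u, hu⟩ := exists_ne v
    obtain ⟨p⟩ := hconn.preconnected v u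
    cases p with
    | nil => exact absurd rfl hu
    | cons hadj q => exact ⟨_, hadj⟩
  -- pick an edge
  obtain ⟨v₀⟩ := hconn.nonempty
  obtain ⟨w₀, hadj⟩ := hpos v₀
  rw [SimpleGraph.mem_neighborSet] at hadj
  -- ediam is finite
  have hne : G.ediam ≠ ⊤ := by
    obtain ⟨a, b, hab⟩ := SimpleGraph.exists_edist_eq_ediam_of_finite (G := G)
    rw [← hab]
    exact SimpleGraph.edist_ne_top_iff_reachable.mpr (hconn.preconnected a b)
  set S : Set V := {v₀, w₀} with hS
  have hScard : S.ncard = 2 := Set.ncard_pair hadj.ne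
  have huniv : ractive G ρ S G.diam = Set.univ := by
    ext v
    simp only [Set.mem_univ, iff_true]
    obtain ⟨p, hp⟩ := hconn.exists_walk_length_eq_dist v v₀
    have hd : G.dist v v₀ ≤ G.diam := SimpleGraph.dist_le_diam hne
    obtain ⟨x, hx, q, hq⟩ := bounce_walk hadj (G.diam - G.dist v v₀)
    have hxS : x ∈ S := by rcases hx with rfl | rfl <;> simp [hS]
    have hlen : (p.append q).length = G.diam := by
      rw [SimpleGraph.Walk.length_append, hp, hq, Nat.add_sub_cancel' hd]
    exact walk_mem_ractive hρ0 hdeg hpos S G.diam v x hxS (p.append q) hlen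
  calc minSeed G ρ G.diam ≤ 2 := Nat.sInf_le ⟨S, hScard, huniv⟩
end

section
/- Let G=(V,E) be a finite simple undirected connected graph with |V| ≥ 2 and diameter Δ, and let ρ ∈ (0,1]. Then min-seed^{(Δ)}(G,ρ) ≤ 2 + Σ_{v ∈ V, d(v) > 1/ρ} (⌈ρ·d(v)⌉ + 1). -/
/-- One step of the cascade. -/
def rstep {V : Type*} (G : SimpleGraph V) (ρ : ℝ) (S : Set V) (A : Set V) : Set V :=
  {v | 0 < (G.neighborSet v).ncard ∧
      ρ * (G.neighborSet v).ncard ≤ ((G.neighborSet v ∩ A).ncard : ℝ)} ∪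
    {v | v ∈ S ∧ (G.neighborSet v).ncard = 0}

lemma ractive_succ {V : Type*} (G : SimpleGraph V) (ρ : ℝ) (S : Set V) (k : ℕ) :
    ractive G ρ S (k + 1) = rstep G ρ S (ractive G ρ S k) := rfl

lemma rstep_mono {V : Type*} [Fintype V] (G : SimpleGraph V) (ρ : ℝ) (S : Set V)
    {A B : Set V} (hAB : A ⊆ B) : rstep G ρ S A ⊆ rstep G ρ S B := by
  intro v hv
  rcases hv with ⟨hd, hc⟩ | hs
  · left
    refine ⟨hd, le_trans hc ?_⟩
    exact_mod_cast Nat.cast_le.mpr (Set.ncard_le_ncard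
      (Set.inter_subset_inter (subset_refl _) hAB)
      ((Set.toFinite (G.neighborSet v)).inter_of_left _))
  · right; exact hs

lemma ractive_subset_succ {V : Type*} [Fintype V] (G : SimpleGraph V) (ρ : ℝ) (S : Set V)
    (h1 : S ⊆ ractive G ρ S 1) : ∀ k, ractive G ρ S k ⊆ ractive G ρ S (k + 1) := by
  intro k
  induction k with
  | zero => exact h1
  | succ n ih =>
    rw [ractive_succ, ractive_succ]
    exact rstep_mono G ρ S ih

lemma seed_subset_ractive {V : Type*} [Fintype V] (G : SimpleGraph V) (ρ : ℝ) (S : Set V)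
    (h1 : S ⊆ ractive G ρ S 1) : ∀ k, S ⊆ ractive G ρ S k := by
  intro k
  induction k with
  | zero => exact subset_refl _
  | succ n ih => exact ih.trans (ractive_subset_succ G ρ S h1 n)

lemma ball_subset_ractive {V : Type*} [Fintype V] (G : SimpleGraph V)
    (hconn : G.Connected) (ρ : ℝ) (S : Set V) (a : V)
    (ha : a ∈ S)
    (h1 : S ⊆ ractive G ρ S 1)
    (hhigh : ∀ v, 1 < ρ * ((G.neighborSet v).ncard : ℝ) → v ∈ S)
    (hdeg : ∀ v : V, 0 < (G.neighborSet v).ncard) :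
    ∀ k v, G.dist a v ≤ k → v ∈ ractive G ρ S k := by
  intro k
  induction k with
  | zero =>
    intro v hv
    have h0 : G.dist a v = 0 := Nat.le_zero.mp hv
    have : a = v := by
      rcases SimpleGraph.dist_eq_zero_iff_eq_or_not_reachable.mp h0 with h | h
      · exact h
      · exact absurd (hconn a v) h
    exact this ▸ ha
  | succ n ih =>
    intro v hv
    by_cases hvS : v ∈ S
    · exact seed_subset_ractive G ρ S h1 (n + 1) hvS
    · have hva : v ≠ a := fun h => hvS (h ▸ ha)
      -- v is a low vertex
      have hlow : ρ * ((G.neighborSet v).ncard : ℝ) ≤ 1 := by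
        by_contra h
        exact hvS (hhigh v (lt_of_not_ge h))
      -- find a neighbor u of v with dist a u ≤ n
      obtain ⟨p, hp⟩ := (hconn a v).exists_walk_length_eq_dist
      have hplen : p.length ≤ n + 1 := hp ▸ hv
      have hpr : p.reverse.length ≤ n + 1 := by
        rwa [SimpleGraph.Walk.length_reverse]
      obtain ⟨u, hadj, q, hq⟩ : ∃ u, G.Adj v u ∧ ∃ q : G.Walk u a, q.length ≤ n := by
        cases hpq : p.reverse with
        | nil => exact absurd rfl hva
        | cons hadj q =>
          refine ⟨_, hadj, q, ?_⟩
          have hl : p.reverse.length = q.length + 1 := by rw [hpq]; simp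
          rw [SimpleGraph.Walk.length_reverse] at hl
          omega
      have hdu : G.dist a u ≤ n := by
        calc G.dist a u = G.dist u a := SimpleGraph.dist_comm
        _ ≤ q.length := SimpleGraph.dist_le q
        _ ≤ n := hq
      have hu : u ∈ ractive G ρ S n := ih u hdu
      rw [ractive_succ]
      left
      refine ⟨hdeg v, le_trans hlow ?_⟩
      have hne : (G.neighborSet v ∩ ractive G ρ S n).Nonempty := ⟨u, hadj, hu⟩
      have hcard : 1 ≤ (G.neighborSet v ∩ ractive G ρ S n).ncard := by
        rw [Nat.one_le_iff_ne_zero]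
        intro h0
        rw [Set.ncard_eq_zero ((Set.toFinite (G.neighborSet v)).inter_of_left _)] at h0
        exact Set.not_nonempty_empty (h0 ▸ hne)
      exact_mod_cast hcard

open Classical in
theorem stmt_2 {V : Type*} [Fintype V] (G : SimpleGraph V)
    (hconn : G.Connected) (hV : 2 ≤ Fintype.card V)
    (ρ : ℝ) (hρ0 : 0 < ρ) (hρ1 : ρ ≤ 1) :
    (minSeed G ρ G.diam : ℝ) ≤
      2 + ∑ v ∈ Finset.univ.filter (fun v : V => 1 / ρ < ((G.neighborSet v).ncard : ℝ)),
        ((⌈ρ * ((G.neighborSet v).ncard : ℝ)⌉ : ℝ) + 1) := by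
  classical
  have hnonempty : Nonempty V := Fintype.card_pos_iff.mp (by omega)
  -- degree function
  set d : V → ℕ := fun v => (G.neighborSet v).ncard with hd
  -- every vertex has positive degree
  have hdeg : ∀ v : V, 0 < d v := by
    intro v
    obtain ⟨w, hw⟩ := Fintype.exists_ne_of_one_lt_card (by omega) v
    obtain ⟨p⟩ := hconn v w
    have : (G.neighborSet v).Nonempty := by
      cases p with
      | nil => exact absurd rfl hw.symm
      | cons h q => exact ⟨_, h⟩
    exact (Set.ncard_pos (Set.toFinite _)).mpr this
  -- an edge
  obtain ⟨a⟩ := hnonempty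
  obtain ⟨b, hab⟩ : ∃ b, G.Adj a b := by
    have := hdeg a
    rw [Set.ncard_pos (Set.toFinite _)] at this
    exact this
  -- high degree vertices
  set H : Finset V := Finset.univ.filter (fun v : V => 1 / ρ < ((G.neighborSet v).ncard : ℝ))
    with hH
  -- the required number of seeded neighbors
  set n : V → ℕ := fun v => (⌈ρ * ((G.neighborSet v).ncard : ℝ)⌉).toNat with hn
  have hnd : ∀ v, n v ≤ d v := by
    intro v
    have h1 : ρ * ((G.neighborSet v).ncard : ℝ) ≤ (d v : ℝ) := by
      calc ρ * ((G.neighborSet v).ncard : ℝ) ≤ 1 * ((G.neighborSet v).ncard : ℝ) := by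
            apply mul_le_mul_of_nonneg_right hρ1 (Nat.cast_nonneg _)
        _ = (d v : ℝ) := by rw [one_mul]
    have : ⌈ρ * ((G.neighborSet v).ncard : ℝ)⌉ ≤ (d v : ℤ) := by
      exact_mod_cast Int.ceil_le.mpr (by exact_mod_cast h1)
    simp only [hn]
    omega
  -- choose n v neighbors of each vertex
  have hchoose : ∀ v : V, ∃ t : Finset V, ↑t ⊆ G.neighborSet v ∧ t.card = n v := by
    intro v
    have hfin : (G.neighborSet v).Finite := Set.toFinite _
    have : n v ≤ hfin.toFinset.card := by
      rw [← Set.ncard_eq_toFinset_card _ hfin]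
      exact hnd v
    obtain ⟨t, ht, hcard⟩ := Finset.exists_subset_card_eq this
    exact ⟨t, by intro x hx; exact (Set.Finite.mem_toFinset hfin).mp (ht hx), hcard⟩
  choose F hF hFcard using hchoose
  -- the seed set
  set T : Finset V := ({a, b} : Finset V) ∪ H.biUnion (fun v => insert v (F v)) with hT
  set S : Set V := (T : Set V) with hS
  have haS : a ∈ S := by
    simp only [hS, hT, Finset.coe_union, Set.mem_union, Finset.coe_insert]
    left; simp
  have hbS : b ∈ S := by
    simp only [hS, hT, Finset.coe_union, Set.mem_union, Finset.coe_insert]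
    left; simp
  have hHS : ∀ v ∈ H, v ∈ S := by
    intro v hv
    simp only [hS, hT, Finset.coe_union, Set.mem_union]
    right
    simp only [Finset.coe_biUnion, Set.mem_iUnion]
    exact ⟨v, hv, by simp⟩
  have hFS : ∀ v ∈ H, (F v : Set V) ⊆ S := by
    intro v hv x hx
    simp only [hS, hT, Finset.coe_union, Set.mem_union]
    right
    simp only [Finset.coe_biUnion, Set.mem_iUnion]
    exact ⟨v, hv, by simp [Finset.mem_insert]; right; exact_mod_cast hx⟩
  -- high vertices characterization
  have hhigh_mem : ∀ v, 1 < ρ * ((G.neighborSet v).ncard : ℝ) → v ∈ H := by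
    intro v hv
    simp only [hH, Finset.mem_filter, Finset.mem_univ, true_and]
    rw [div_lt_iff₀ hρ0]
    nlinarith
  have hlow : ∀ v, v ∉ H → ρ * ((G.neighborSet v).ncard : ℝ) ≤ 1 := by
    intro v hv
    simp only [hH, Finset.mem_filter, Finset.mem_univ, true_and, not_lt] at hv
    calc ρ * ((G.neighborSet v).ncard : ℝ) ≤ ρ * (1 / ρ) := by
          apply mul_le_mul_of_nonneg_left hv (le_of_lt hρ0)
      _ = 1 := by field_simp
  -- S is a subset of round 1
  have hS1 : S ⊆ ractive G ρ S 1 := by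
    intro x hx
    rw [ractive_succ]
    left
    refine ⟨hdeg x, ?_⟩
    by_cases hxH : x ∈ H
    · -- high vertex: F x gives enough active neighbors
      have hsub : (F x : Set V) ⊆ G.neighborSet x ∩ ractive G ρ S 0 := by
        intro y hy
        exact ⟨hF x hy, hFS x hxH hy⟩
      have hge : n x ≤ (G.neighborSet x ∩ ractive G ρ S 0).ncard := by
        calc n x = (F x).card := (hFcard x).symm
          _ = (F x : Set V).ncard := (Set.ncard_coe_finset _).symm
          _ ≤ _ := Set.ncard_le_ncard hsub ((Set.toFinite (G.neighborSet x)).inter_of_left _)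
      have hceil : ρ * ((G.neighborSet x).ncard : ℝ) ≤ (n x : ℝ) := by
        have h0 : (0:ℝ) ≤ ρ * ((G.neighborSet x).ncard : ℝ) :=
          mul_nonneg (le_of_lt hρ0) (Nat.cast_nonneg _)
        have hle := Int.le_ceil (ρ * ((G.neighborSet x).ncard : ℝ))
        have hpos : (0:ℤ) ≤ ⌈ρ * ((G.neighborSet x).ncard : ℝ)⌉ := Int.ceil_nonneg h0
        have hnx : ((n x : ℤ)) = ⌈ρ * ((G.neighborSet x).ncard : ℝ)⌉ := by
          simp only [hn]; exact Int.toNat_of_nonneg hpos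
        calc ρ * ((G.neighborSet x).ncard : ℝ) ≤ (⌈ρ * ((G.neighborSet x).ncard : ℝ)⌉ : ℝ) := hle
          _ = ((n x : ℤ) : ℝ) := by rw [hnx]
          _ = (n x : ℝ) := by norm_cast
      calc ρ * ((G.neighborSet x).ncard : ℝ) ≤ (n x : ℝ) := hceil
        _ ≤ _ := by exact_mod_cast hge
    · -- low vertex: has a neighbor in S
      have hnbr : ∃ y, y ∈ G.neighborSet x ∧ y ∈ S := by
        simp only [hS, hT, Finset.coe_union, Set.mem_union, Finset.coe_insert,
          Finset.coe_biUnion, Set.mem_iUnion] at hx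
        rcases hx with hx | hx
        · rcases hx with hx | hx
          · exact ⟨b, hx ▸ hab, hbS⟩
          · have hxb : x = b := by simpa using hx
            exact ⟨a, by rw [hxb]; exact hab.symm, haS⟩
        · obtain ⟨v, hvH, hxv⟩ := hx
          rcases Finset.mem_insert.mp (by exact_mod_cast hxv) with h | h
          · exact absurd (h ▸ hvH) hxH
          · have hxv' : x ∈ G.neighborSet v := hF v h
            exact ⟨v, ((SimpleGraph.mem_neighborSet G x v).mpr
              ((SimpleGraph.mem_neighborSet G v x).mp hxv').symm), hHS v hvH⟩
      obtain ⟨y, hy1, hy2⟩ := hnbr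
      have hne : 1 ≤ (G.neighborSet x ∩ ractive G ρ S 0).ncard := by
        rw [Nat.one_le_iff_ne_zero]
        intro h0
        rw [Set.ncard_eq_zero ((Set.toFinite (G.neighborSet x)).inter_of_left _)] at h0
        have hne : (G.neighborSet x ∩ ractive G ρ S 0).Nonempty := ⟨y, hy1, hy2⟩
        rw [h0] at hne
        exact Set.not_nonempty_empty hne
      calc ρ * ((G.neighborSet x).ncard : ℝ) ≤ 1 := hlow x hxH
        _ ≤ _ := by exact_mod_cast hne
  -- everything active at round diam
  have hall : ractive G ρ S G.diam = Set.univ := by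
    apply Set.eq_univ_of_forall
    intro v
    have hediam : G.ediam ≠ ⊤ := by
      have hle : G.ediam ≤ (Fintype.card V : ℕ∞) := by
        rw [SimpleGraph.ediam_def]
        apply iSup_le
        intro p
        obtain ⟨w⟩ := hconn p.1 p.2
        calc G.edist p.1 p.2 ≤ w.bypass.length := SimpleGraph.edist_le _
          _ ≤ (Fintype.card V : ℕ∞) := by
            exact_mod_cast le_of_lt (by exact_mod_cast w.bypass_isPath.length_lt)
      exact ne_top_of_le_ne_top (by simp) hle
    have hdist : G.dist a v ≤ G.diam := SimpleGraph.dist_le_diam hediam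
    exact ball_subset_ractive G hconn ρ S a haS hS1
      (fun w hw => hHS w (hhigh_mem w hw)) hdeg G.diam v hdist
  -- minSeed bound
  have hmem : S.ncard ∈ {m | ∃ S' : Set V, S'.ncard = m ∧ ractive G ρ S' G.diam = Set.univ} :=
    ⟨S, rfl, hall⟩
  have hmin : minSeed G ρ G.diam ≤ S.ncard := Nat.sInf_le hmem
  have hScard : S.ncard = T.card := Set.ncard_coe_finset T
  -- cardinality bound
  have hTcard : T.card ≤ 2 + ∑ v ∈ H, (n v + 1) := by
    calc T.card ≤ ({a, b} : Finset V).card + (H.biUnion (fun v => insert v (F v))).card :=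
          Finset.card_union_le _ _
      _ ≤ 2 + ∑ v ∈ H, (insert v (F v)).card := by
          gcongr
          · exact le_trans (Finset.card_insert_le _ _) (by simp)
          · exact Finset.card_biUnion_le
      _ ≤ 2 + ∑ v ∈ H, (n v + 1) := by
          gcongr with v hv
          calc (insert v (F v)).card ≤ (F v).card + 1 := Finset.card_insert_le _ _
            _ = n v + 1 := by rw [hFcard]
  -- put it together over ℝ
  calc (minSeed G ρ G.diam : ℝ) ≤ (S.ncard : ℝ) := by exact_mod_cast hmin
    _ = (T.card : ℝ) := by exact_mod_cast hScard
    _ ≤ (2 + ∑ v ∈ H, (n v + 1) : ℕ) := by exact_mod_cast hTcard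
    _ = 2 + ∑ v ∈ H, ((n v : ℝ) + 1) := by push_cast; ring
    _ = 2 + ∑ v ∈ H, ((⌈ρ * ((G.neighborSet v).ncard : ℝ)⌉ : ℝ) + 1) := by
        congr 1
        apply Finset.sum_congr rfl
        intro v hv
        congr 1
        have h0 : (0:ℝ) ≤ ρ * ((G.neighborSet v).ncard : ℝ) :=
          mul_nonneg (le_of_lt hρ0) (Nat.cast_nonneg _)
        have hpos : (0:ℤ) ≤ ⌈ρ * ((G.neighborSet v).ncard : ℝ)⌉ := Int.ceil_nonneg h0
        simp only [hn]
        exact_mod_cast Int.toNat_of_nonneg hpos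
end

section
/- Let G=(V,E) be a finite simple undirected connected graph with |V| ≥ 2 and diameter Δ, and let ρ ∈ (0,1]. Then there exists a seed set S ⊆ V with |S| ≤ 2 + Σ_{v ∈ V, d(v) > 1/ρ} (⌈ρ·d(v)⌉ + 1) such that S ⊆ Active^{(1)}(S,G,ρ) and Active^{(Δ)}(S,G,ρ) = V. -/
/-!
Fix an edge `ab`. Call a vertex hard when `ρ·d(v) > 1`; every other vertex becomes active as
soon as one neighbour is active. Seed `a`, `b`, every hard vertex `v` and `⌈ρ·d(v)⌉` of its
neighbours. Each seed then has enough active neighbours already in round `0`: a hard seed has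
its chosen neighbours, and every other seed is `a`, `b` or a chosen neighbour of a hard seed.
So the cascade is monotone, and since every non-seed vertex is easy, the activation spreads
from `a` along shortest paths, reaching distance `k` by round `k`.
-/

section

open Finset

variable {V : Type*}

namespace SimpleGraph

lemma Reachable.exists_adj_dist_lt {G : SimpleGraph V} {a v : V} (hr : G.Reachable v a)
    (hne : v ≠ a) : ∃ u, G.Adj v u ∧ G.dist u a < G.dist v a := by
  obtain ⟨p, hp⟩ := hr.exists_walk_length_eq_dist
  cases p with
  | nil => exact absurd rfl hne
  | cons h q => exact ⟨_, h, hp ▸ (dist_le q).trans_lt (by simp)⟩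

end SimpleGraph

section Cascade

variable (G : SimpleGraph V) (ρ : ℝ) {S : Set V}

lemma mem_ractive_succ_of_finset {v : V} {k : ℕ} (T : Finset V)
    (hpos : 0 < (G.neighborSet v).ncard) (hT : ↑T ⊆ G.neighborSet v ∩ ractive G ρ S k)
    (hρT : ρ * (G.neighborSet v).ncard ≤ #T) : v ∈ ractive G ρ S (k + 1) := by
  refine Or.inl ⟨hpos, hρT.trans ?_⟩
  have hfin := (Set.finite_of_ncard_pos hpos).inter_of_left (ractive G ρ S k)
  exact_mod_cast Set.ncard_coe_finset T ▸ Set.ncard_le_ncard hT hfin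

lemma mem_ractive_succ_of_adj {u v : V} {k : ℕ} (hpos : 0 < (G.neighborSet v).ncard)
    (hρ : ρ * (G.neighborSet v).ncard ≤ 1) (huv : G.Adj v u) (hu : u ∈ ractive G ρ S k) :
    v ∈ ractive G ρ S (k + 1) :=
  mem_ractive_succ_of_finset G ρ {u} hpos (by simpa using ⟨huv, hu⟩) (by simpa using hρ)

lemma ractive_subset_ractive_succ (hS : S ⊆ ractive G ρ S 1) (k : ℕ) :
    ractive G ρ S k ⊆ ractive G ρ S (k + 1) := by
  induction k with
  | zero => exact hS
  | succ k ih =>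
    rintro v (⟨hpos, hv⟩ | hv)
    · refine Or.inl ⟨hpos, hv.trans ?_⟩
      have hfin := (Set.finite_of_ncard_pos hpos).inter_of_left (ractive G ρ S (k + 1))
      exact_mod_cast Set.ncard_le_ncard (Set.inter_subset_inter_right _ ih) hfin
    · exact Or.inr hv

lemma subset_ractive (hS : S ⊆ ractive G ρ S 1) (k : ℕ) : S ⊆ ractive G ρ S k :=
  monotone_nat_of_le_succ (ractive_subset_ractive_succ G ρ hS) k.zero_le

lemma mem_ractive_of_dist_le (hconn : G.Connected) (hS : S ⊆ ractive G ρ S 1) {a : V}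
    (ha : a ∈ S)
    (heasy : ∀ v ∉ S, 0 < (G.neighborSet v).ncard ∧ ρ * (G.neighborSet v).ncard ≤ 1)
    (k : ℕ) : ∀ v, G.dist v a ≤ k → v ∈ ractive G ρ S k := by
  induction k with
  | zero =>
    intro v hv
    rwa [hconn.dist_eq_zero_iff.mp (Nat.le_zero.mp hv)]
  | succ k ih =>
    intro v hv
    by_cases hvS : v ∈ S
    · exact subset_ractive G ρ hS _ hvS
    obtain ⟨u, huv, hu⟩ := (hconn v a).exists_adj_dist_lt (ne_of_mem_of_not_mem ha hvS).symm
    exact mem_ractive_succ_of_adj G ρ (heasy v hvS).1 (heasy v hvS).2 huv (ih u (by omega))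

lemma ractive_diam_eq_univ [Finite V] (hconn : G.Connected) (hS : S ⊆ ractive G ρ S 1)
    {a : V} (ha : a ∈ S)
    (heasy : ∀ v ∉ S, 0 < (G.neighborSet v).ncard ∧ ρ * (G.neighborSet v).ncard ≤ 1) :
    ractive G ρ S G.diam = Set.univ := by
  have : Nonempty V := hconn.nonempty
  have hdiam : G.ediam ≠ ⊤ := G.connected_iff_ediam_ne_top.mp hconn
  exact Set.eq_univ_of_forall fun v =>
    mem_ractive_of_dist_le G ρ hconn hS ha heasy _ v (G.dist_le_diam hdiam)

end Cascade

lemma exists_finset_subset_neighborSet_card_eq_ceil [Finite V] (G : SimpleGraph V) {ρ : ℝ}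
    (hρ : ρ ≤ 1) (v : V) :
    ∃ t : Finset V, ↑t ⊆ G.neighborSet v ∧ #t = ⌈ρ * (G.neighborSet v).ncard⌉₊ := by
  obtain ⟨t, hts, ht⟩ := Set.exists_subset_card_eq (s := G.neighborSet v) <|
    Nat.ceil_le.mpr (mul_le_of_le_one_left (Nat.cast_nonneg _) hρ)
  exact ⟨(Set.toFinite t).toFinset, by simpa using hts, by rw [← ht, Set.ncard_eq_toFinset_card]⟩

section SeedSet

variable [DecidableEq V]

def seedSet (a b : V) (H : Finset V) (T : V → Finset V) : Finset V :=
  {a, b} ∪ H.biUnion fun v => insert v (T v)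

lemma card_seedSet_le (a b : V) (H : Finset V) (T : V → Finset V) :
    #(seedSet a b H T) ≤ 2 + ∑ v ∈ H, (#(T v) + 1) :=
  calc #(seedSet a b H T) ≤ #{a, b} + #(H.biUnion fun v => insert v (T v)) := card_union_le _ _
    _ ≤ 2 + ∑ v ∈ H, #(insert v (T v)) := add_le_add card_le_two card_biUnion_le
    _ ≤ 2 + ∑ v ∈ H, (#(T v) + 1) := by gcongr; exact card_insert_le _ _

variable {a b : V} {H : Finset V} {T : V → Finset V}

lemma left_mem_seedSet : a ∈ seedSet a b H T := by simp [seedSet]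

lemma right_mem_seedSet : b ∈ seedSet a b H T := by simp [seedSet]

lemma mem_seedSet_of_mem {v : V} (hv : v ∈ H) : v ∈ seedSet a b H T := by
  simp only [seedSet, mem_union, mem_biUnion]
  exact Or.inr ⟨v, hv, mem_insert_self _ _⟩

lemma mem_seedSet_of_mem_of_mem {u v : V} (hv : v ∈ H) (hu : u ∈ T v) :
    u ∈ seedSet a b H T := by
  simp only [seedSet, mem_union, mem_biUnion]
  exact Or.inr ⟨v, hv, mem_insert_of_mem hu⟩

variable {G : SimpleGraph V} {ρ : ℝ}

lemma exists_adj_mem_seedSet (hab : G.Adj a b) (hTN : ∀ v, ↑(T v) ⊆ G.neighborSet v) {s : V}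
    (hs : s ∈ seedSet a b H T) (hsH : s ∉ H) : ∃ u, G.Adj s u ∧ u ∈ seedSet a b H T := by
  simp only [seedSet, mem_union, mem_insert, mem_singleton, mem_biUnion] at hs
  rcases hs with (rfl | rfl) | ⟨v, hvH, rfl | hsv⟩
  · exact ⟨b, hab, right_mem_seedSet⟩
  · exact ⟨a, hab.symm, left_mem_seedSet⟩
  · exact absurd hvH hsH
  · exact ⟨v, (hTN v hsv).symm, mem_seedSet_of_mem hvH⟩

lemma seedSet_subset_ractive_one (hdeg : ∀ v, 0 < (G.neighborSet v).ncard) (hab : G.Adj a b)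
    (hTN : ∀ v, ↑(T v) ⊆ G.neighborSet v)
    (hhard : ∀ v ∈ H, ρ * (G.neighborSet v).ncard ≤ #(T v))
    (heasy : ∀ v ∉ H, ρ * (G.neighborSet v).ncard ≤ 1) :
    ↑(seedSet a b H T) ⊆ ractive G ρ (seedSet a b H T) 1 := by
  intro s hs
  by_cases hsH : s ∈ H
  · refine mem_ractive_succ_of_finset G ρ (T s) (hdeg s) ?_ (hhard s hsH)
    exact fun u hu => ⟨hTN s hu, mem_seedSet_of_mem_of_mem hsH hu⟩
  · obtain ⟨u, hsu, hu⟩ := exists_adj_mem_seedSet hab hTN hs hsH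
    exact mem_ractive_succ_of_adj G ρ (hdeg s) (heasy s hsH) hsu hu

end SeedSet

end

open Classical in
theorem stmt_3 {V : Type*} [Fintype V] (G : SimpleGraph V)
    (hconn : G.Connected) (hV : 2 ≤ Fintype.card V)
    (ρ : ℝ) (hρ0 : 0 < ρ) (hρ1 : ρ ≤ 1) :
    ∃ S : Set V,
      (S.ncard : ℝ) ≤
        2 + ∑ v ∈ Finset.univ.filter (fun v : V => 1 / ρ < ((G.neighborSet v).ncard : ℝ)),
          ((⌈ρ * ((G.neighborSet v).ncard : ℝ)⌉ : ℝ) + 1) ∧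
      S ⊆ ractive G ρ S 1 ∧ ractive G ρ S G.diam = Set.univ := by
  have : Nontrivial V := Fintype.one_lt_card_iff_nontrivial.mp hV
  have hadj := hconn.preconnected.exists_adj_of_nontrivial
  have hdeg : ∀ v, 0 < (G.neighborSet v).ncard := fun v =>
    (Set.ncard_pos).mpr (G.nonempty_neighborSet.mpr (hadj v))
  obtain ⟨a⟩ := hconn.nonempty
  obtain ⟨b, hab⟩ := hadj a
  choose T hTN hTcard using exists_finset_subset_neighborSet_card_eq_ceil G hρ1
  set H := Finset.univ.filter fun v : V => 1 / ρ < ((G.neighborSet v).ncard : ℝ)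
  have heasy : ∀ v ∉ H, ρ * (G.neighborSet v).ncard ≤ 1 := fun v hv =>
    (le_div_iff₀' hρ0).mp (not_lt.mp fun h => hv (Finset.mem_filter.mpr ⟨Finset.mem_univ v, h⟩))
  have hS := seedSet_subset_ractive_one hdeg hab hTN
    (fun v _ => hTcard v ▸ Nat.le_ceil _) heasy
  refine ⟨seedSet a b H T, ?_, hS, ractive_diam_eq_univ G ρ hconn hS left_mem_seedSet
    fun v hv => ⟨hdeg v, heasy v fun hvH => hv (mem_seedSet_of_mem hvH)⟩⟩
  calc ((seedSet a b H T : Set V).ncard : ℝ) ≤ ((2 + ∑ v ∈ H, ((T v).card + 1) : ℕ) : ℝ) := by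
        rw [Set.ncard_coe_finset]; exact_mod_cast card_seedSet_le a b H T
    _ = _ := by
        push_cast
        refine congrArg _ (Finset.sum_congr rfl fun v _ => ?_)
        rw [hTcard, natCast_ceil_eq_intCast_ceil (by positivity)]
end

section
/- Let G=(V,E) be a finite simple undirected connected graph with |V| ≥ 2, let ρ ∈ (0,1], and let S ⊆ V be nonempty such that (i) every u ∈ S satisfies |N(u) ∩ S| ≥ ⌈ρ·d(u)⌉ and (ii) every w ∈ V∖S satisfies d(w) ≤ 1/ρ. Then for every i ∈ ℕ and every k ≥ i, the set N^i[S] of all vertices at graph distance at most i from S satisfies N^i[S] ⊆ Active^{(k)}(S,G,ρ). -/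
/-- `nbrBall G S i` is the set of vertices at graph distance at most `i` from `S`:
`N^0[S] = S` and `N^{i+1}[S] = N^i[S] ∪ N(N^i[S])`. -/
def nbrBall {V : Type*} (G : SimpleGraph V) (S : Set V) : ℕ → Set V
  | 0 => S
  | i + 1 => nbrBall G S i ∪ {v | ∃ u ∈ nbrBall G S i, G.Adj u v}

lemma nbrBall_subset_succ {V : Type*} (G : SimpleGraph V) (S : Set V) (i : ℕ) :
    nbrBall G S i ⊆ nbrBall G S (i + 1) := by
  intro v hv; exact Or.inl hv

lemma exists_adj_mem {V : Type*} (G : SimpleGraph V) (S : Set V) :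
    ∀ i : ℕ, ∀ v : V, v ∈ nbrBall G S (i + 1) → v ∉ S →
      ∃ u ∈ nbrBall G S i, G.Adj u v := by
  intro i
  induction i with
  | zero =>
    intro v hv hvS
    rcases hv with h | ⟨u, hu, hadj⟩
    · exact absurd h hvS
    · exact ⟨u, hu, hadj⟩
  | succ i ih =>
    intro v hv hvS
    rcases hv with h | ⟨u, hu, hadj⟩
    · obtain ⟨u, hu, hadj⟩ := ih v h hvS
      exact ⟨u, nbrBall_subset_succ G S i hu, hadj⟩
    · exact ⟨u, hu, hadj⟩

lemma deg_pos {V : Type*} [Fintype V] (G : SimpleGraph V) (hconn : G.Connected)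
    (hV : 2 ≤ Fintype.card V) (v : V) : 0 < (G.neighborSet v).ncard := by
  obtain ⟨w, hw⟩ := Fintype.exists_ne_of_one_lt_card (by omega) v
  obtain ⟨p⟩ := hconn.preconnected v w
  rw [Set.ncard_pos (Set.toFinite _)]
  cases p with
  | nil => exact (hw rfl).elim
  | cons h _ => exact ⟨_, h⟩

theorem stmt_4 {V : Type*} [Fintype V] (G : SimpleGraph V)
    (hconn : G.Connected) (hV : 2 ≤ Fintype.card V)
    (ρ : ℝ) (hρ0 : 0 < ρ) (hρ1 : ρ ≤ 1)
    (S : Set V) (hSne : S.Nonempty)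
    (hstable : ∀ u ∈ S,
      (⌈ρ * ((G.neighborSet u).ncard : ℝ)⌉ : ℝ) ≤ ((G.neighborSet u ∩ S).ncard : ℝ))
    (hsmall : ∀ w ∉ S, ((G.neighborSet w).ncard : ℝ) ≤ 1 / ρ) :
    ∀ i k : ℕ, i ≤ k → nbrBall G S i ⊆ ractive G ρ S k := by
  have main : ∀ k : ℕ, ∀ i : ℕ, i ≤ k → nbrBall G S i ⊆ ractive G ρ S k := by
    intro k
    induction k with
    | zero =>
      intro i hi
      interval_cases i
      intro v hv; exact hv
    | succ k ih =>
      intro i hi v hv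
      left
      refine ⟨deg_pos G hconn hV v, ?_⟩
      by_cases hvS : v ∈ S
      · -- use stability of S and S ⊆ ractive k
        have hSsub : S ⊆ ractive G ρ S k := ih 0 (Nat.zero_le k)
        have h1 : ρ * ((G.neighborSet v).ncard : ℝ) ≤
            (⌈ρ * ((G.neighborSet v).ncard : ℝ)⌉ : ℝ) := Int.le_ceil _
        have h2 := hstable v hvS
        have h3 : (G.neighborSet v ∩ S).ncard ≤ (G.neighborSet v ∩ ractive G ρ S k).ncard :=
          Set.ncard_le_ncard (Set.inter_subset_inter_right _ hSsub) (Set.toFinite _)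
        calc ρ * ((G.neighborSet v).ncard : ℝ)
            ≤ ((G.neighborSet v ∩ S).ncard : ℝ) := h1.trans h2
          _ ≤ _ := by exact_mod_cast h3
      · -- v ∉ S : it has a neighbor in nbrBall at level one lower
        obtain ⟨j, rfl⟩ : ∃ j, i = j + 1 := by
          cases i with
          | zero => exact absurd hv hvS
          | succ j => exact ⟨j, rfl⟩
        obtain ⟨u, hu, hadj⟩ := exists_adj_mem G S j v hv hvS
        have hu' : u ∈ ractive G ρ S k := ih j (Nat.succ_le_succ_iff.mp hi) hu
        have hmem : u ∈ G.neighborSet v ∩ ractive G ρ S k := ⟨hadj.symm, hu'⟩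
        have hone : (1 : ℝ) ≤ ((G.neighborSet v ∩ ractive G ρ S k).ncard : ℝ) := by
          have : 0 < (G.neighborSet v ∩ ractive G ρ S k).ncard :=
            (Set.ncard_pos (Set.toFinite _)).mpr ⟨u, hmem⟩
          exact_mod_cast this
        have hρd : ρ * ((G.neighborSet v).ncard : ℝ) ≤ 1 := by
          have := hsmall v hvS
          calc ρ * ((G.neighborSet v).ncard : ℝ) ≤ ρ * (1 / ρ) :=
                mul_le_mul_of_nonneg_left this hρ0.le
            _ = 1 := by field_simp
        exact hρd.trans hone
  intro i k hik
  exact main k i hik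
end
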